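/- Let (X,ρ) be a compact metric space, f : X → X continuous, and k, h ∈ ℕ. Then for every ε > 0 there exist 0 < γ < δ < ε such that for every x ∈ X and m ∈ ℕ: ĉ^{f^k}_m(x,γ) ≤ ĉ^{f^k}_m(f^h(x),δ) ≤ ĉ^{f^k}_m(x,ε) and č^{f^k}_m(x,γ) ≤ č^{f^k}_m(f^h(x),δ) ≤ č^{f^k}_m(x,ε). -/

import Mathlib

open Filter Topology Set MeasureTheory

section Defs

variable {X : Type*} [MetricSpace X]

/-- Bowen's metric `ρ^f_m(y,z) = max_{0 ≤ i < m} ρ(f^i y, f^i z)`. -/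
noncomputable def bowenDist (f : X → X) (m : ℕ) (y z : X) : ℝ :=
  (((Finset.range m).sup fun i => nndist (f^[i] y) (f^[i] z)) : NNReal)

open scoped Classical in
/-- The correlation sum `C^f_m(x,n,ε)`. -/
noncomputable def corrSum (f : X → X) (m : ℕ) (x : X) (n : ℕ) (ε : ℝ) : ℝ :=
  (((Finset.range n ×ˢ Finset.range n).filter fun q =>
      bowenDist f m (f^[q.1] x) (f^[q.2] x) ≤ ε).card : ℝ) / (n : ℝ) ^ 2

/-- `ĉ^f_m(x,ε) = limsup_{n→∞} C^f_m(x,n,ε)`. -/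
noncomputable def corrUpper (f : X → X) (m : ℕ) (x : X) (ε : ℝ) : ℝ :=
  Filter.limsup (fun n : ℕ => corrSum f m x n ε) Filter.atTop

/-- `č^f_m(x,ε) = liminf_{n→∞} C^f_m(x,n,ε)`. -/
noncomputable def corrLower (f : X → X) (m : ℕ) (x : X) (ε : ℝ) : ℝ :=
  Filter.liminf (fun n : ℕ => corrSum f m x n ε) Filter.atTop

/-- The upper local correlation entropy `entr⁺(f,x) = lim_{ε→0⁺} limsup_m (−1/m) log č^f_m(x,ε)`;
the limit as `ε → 0⁺` exists by monotonicity in `ε`, and is expressed here as a `limsup`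
along `𝓝[>] 0` (with values in `EReal`). -/
noncomputable def entrUpper (f : X → X) (x : X) : EReal :=
  Filter.limsup (fun ε : ℝ =>
      Filter.limsup (fun m : ℕ => ((-(1 / (m : ℝ)) * Real.log (corrLower f m x ε) : ℝ) : EReal))
        Filter.atTop)
    (𝓝[>] (0 : ℝ))

/-- The lower local correlation entropy `entr⁻(f,x) = lim_{ε→0⁺} liminf_m (−1/m) log ĉ^f_m(x,ε)`. -/
noncomputable def entrLower (f : X → X) (x : X) : EReal :=
  Filter.limsup (fun ε : ℝ =>
      Filter.liminf (fun m : ℕ => ((-(1 / (m : ℝ)) * Real.log (corrUpper f m x ε) : ℝ) : EReal))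
        Filter.atTop)
    (𝓝[>] (0 : ℝ))

/-- `r_m(ε,K)`: the smallest cardinality of a subset of `K` which `(m,ε)`-spans `K`. -/
noncomputable def spanNumOn (f : X → X) (K : Set X) (m : ℕ) (ε : ℝ) : ℕ :=
  sInf {k : ℕ | ∃ A : Finset X, ↑A ⊆ K ∧ A.card = k ∧ ∀ y ∈ K, ∃ a ∈ A, bowenDist f m y a ≤ ε}

/-- Bowen's topological entropy of `f` on `K` (for `K = univ`, of `f` itself;
for closed invariant `K`, of the restriction of `f` to `K`). -/
noncomputable def topEntropyOn (f : X → X) (K : Set X) : EReal :=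
  Filter.limsup (fun ε : ℝ =>
      Filter.limsup (fun n : ℕ => (((1 / (n : ℝ)) * Real.log (spanNumOn f K n ε) : ℝ) : EReal))
        Filter.atTop)
    (𝓝[>] (0 : ℝ))

end Defs

/-!
If `φ` commutes with `g = f^k` and maps `a`-close points to `b`-close points, it maps
`(g, m, a)`-close pairs of the `g`-orbit of `x` to `(g, m, b)`-close pairs of the `g`-orbit of
`φ x`, so correlation sums can only grow from `(x, a)` to `(φ x, b)`. On a compact space,
uniform continuity of `f^h` and of `f^(kh - h)` provides such `γ < δ < ε`. Taking `φ = f^h` gives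
the left inequalities; taking `φ = f^(kh - h)`, which sends `f^h x` to `g^h x`, gives the right
ones, because `ĉ` and `č` do not increase along `g`-orbits: the orbit of `g^s x` is a tail of the
orbit of `x`, and dropping `s` of `n + s` orbit points changes correlation sums by a factor
tending to `1`.
-/

section LimsupMul

variable {ι : Type*} {l : Filter ι} [l.NeBot] {u v c : ι → ℝ}

lemma limsup_le_limsup_of_mul_le (hu₀ : 0 ≤ᶠ[l] u) (hu : IsBoundedUnder (· ≤ ·) l u)
    (hv : IsBoundedUnder (· ≤ ·) l v) (hc : Tendsto c l (𝓝 1)) (h : u * c ≤ᶠ[l] v) :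
    limsup u l ≤ limsup v l := by
  have hc₀ : 0 ≤ᶠ[l] c := hc.eventually (eventually_ge_nhds zero_lt_one)
  have huc₀ : 0 ≤ᶠ[l] u * c := (hu₀.and hc₀).mono fun _ h => mul_nonneg h.1 h.2
  calc limsup u l = limsup u l * liminf c l := by rw [hc.liminf_eq, mul_one]
    _ ≤ limsup (u * c) l := le_limsup_mul hu₀.frequently hu hc₀ hc.isBoundedUnder_le
    _ ≤ limsup v l := limsup_le_limsup h (isCoboundedUnder_le_of_eventually_le l huc₀) hv

lemma liminf_le_liminf_of_mul_le (hu₀ : 0 ≤ᶠ[l] u) (hu : IsBoundedUnder (· ≤ ·) l u)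
    (hv : IsBoundedUnder (· ≤ ·) l v) (hc : Tendsto c l (𝓝 1)) (h : u * c ≤ᶠ[l] v) :
    liminf u l ≤ liminf v l := by
  have hc₀ : 0 ≤ᶠ[l] c := hc.eventually (eventually_ge_nhds zero_lt_one)
  have huc₀ : 0 ≤ᶠ[l] u * c := (hu₀.and hc₀).mono fun _ h => mul_nonneg h.1 h.2
  calc liminf u l = liminf u l * liminf c l := by rw [hc.liminf_eq, mul_one]
    _ ≤ liminf (u * c) l := le_liminf_mul hu₀ hu hc₀ hc.isBoundedUnder_le.isCoboundedUnder_ge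
    _ ≤ liminf v l :=
        liminf_le_liminf h (isBoundedUnder_of_eventually_ge huc₀) hv.isCoboundedUnder_ge

end LimsupMul

lemma UniformContinuous.exists_lt_forall_dist_le {X Y : Type*} [PseudoMetricSpace X]
    [PseudoMetricSpace Y] {φ : X → Y} (hφ : UniformContinuous φ) {ε : ℝ} (hε : 0 < ε) :
    ∃ δ, 0 < δ ∧ δ < ε ∧ ∀ u v, dist u v ≤ δ → dist (φ u) (φ v) ≤ ε := by
  obtain ⟨δ, hδ, hφδ⟩ := Metric.uniformContinuous_iff.mp hφ ε hε
  refine ⟨min (δ / 2) (ε / 2), by positivity, by linarith [min_le_right (δ / 2) (ε / 2)],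
    fun u v huv => (hφδ ?_).le⟩
  linarith [min_le_left (δ / 2) (ε / 2)]

section Correlation

variable {X : Type*} [MetricSpace X] {g φ : X → X} {m n s : ℕ} {x y z : X} {a b : ℝ}

open scoped Classical in
noncomputable def corrCount (g : X → X) (m : ℕ) (x : X) (n : ℕ) (a : ℝ) : ℕ :=
  ((Finset.range n ×ˢ Finset.range n).filter fun q =>
    bowenDist g m (g^[q.1] x) (g^[q.2] x) ≤ a).card

lemma corrSum_eq_corrCount_div : corrSum g m x n a = corrCount g m x n a / (n : ℝ) ^ 2 := rfl

lemma bowenDist_nonneg : 0 ≤ bowenDist g m y z := NNReal.coe_nonneg _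

lemma bowenDist_le_iff (hb : 0 ≤ b) :
    bowenDist g m y z ≤ b ↔ ∀ i < m, dist (g^[i] y) (g^[i] z) ≤ b := by
  lift b to NNReal using hb
  unfold bowenDist
  simp only [NNReal.coe_le_coe, Finset.sup_le_iff, Finset.mem_range, dist_nndist]

lemma bowenDist_apply_le (hφ : Function.Commute φ g) (hb : 0 ≤ b)
    (H : ∀ u v, dist u v ≤ a → dist (φ u) (φ v) ≤ b) (hyz : bowenDist g m y z ≤ a) :
    bowenDist g m (φ y) (φ z) ≤ b := by
  rw [bowenDist_le_iff (bowenDist_nonneg.trans hyz)] at hyz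
  rw [bowenDist_le_iff hb]
  intro i hi
  rw [← (hφ.iterate_right i).eq, ← (hφ.iterate_right i).eq]
  exact H _ _ (hyz i hi)

lemma corrCount_le_sq : corrCount g m x n a ≤ n ^ 2 :=
  (Finset.card_filter_le _ _).trans_eq (by simp [sq])

lemma corrCount_le_corrCount_apply (hφ : Function.Commute φ g) (hb : 0 ≤ b)
    (H : ∀ u v, dist u v ≤ a → dist (φ u) (φ v) ≤ b) :
    corrCount g m x n a ≤ corrCount g m (φ x) n b := by
  refine Finset.card_le_card fun q hq => ?_
  simp only [Finset.mem_filter, ← (hφ.iterate_right _).eq] at hq ⊢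
  exact ⟨hq.1, bowenDist_apply_le hφ hb H hq.2⟩

lemma corrCount_iterate_le : corrCount g m (g^[s] x) n a ≤ corrCount g m x (n + s) a := by
  refine Finset.card_le_card_of_injOn (fun q => (q.1 + s, q.2 + s)) (fun q hq => ?_)
    (fun q _ q' _ hqq' => ?_)
  · simp only [Finset.coe_filter, Finset.mem_product, Finset.mem_range, Set.mem_ofPred_eq,
      ← Function.iterate_add_apply] at hq ⊢
    exact ⟨⟨by omega, by omega⟩, hq.2⟩
  · simp only [Prod.ext_iff] at hqq' ⊢
    omega

lemma corrSum_nonneg : 0 ≤ corrSum g m x n a := by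
  rw [corrSum_eq_corrCount_div]
  positivity

lemma corrSum_le_one : corrSum g m x n a ≤ 1 := by
  rw [corrSum_eq_corrCount_div]
  exact div_le_one_of_le₀ (by exact_mod_cast corrCount_le_sq) (by positivity)

lemma isBoundedUnder_corrSum :
    IsBoundedUnder (· ≤ ·) atTop fun n => corrSum g m x n a :=
  isBoundedUnder_of ⟨1, fun _ => corrSum_le_one⟩

lemma corrSum_le_corrSum_apply (hφ : Function.Commute φ g) (hb : 0 ≤ b)
    (H : ∀ u v, dist u v ≤ a → dist (φ u) (φ v) ≤ b) :
    corrSum g m x n a ≤ corrSum g m (φ x) n b := by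
  simp only [corrSum_eq_corrCount_div]
  gcongr
  exact corrCount_le_corrCount_apply hφ hb H

lemma corrSum_iterate_mul_le :
    corrSum g m (g^[s] x) n a * ((n : ℝ) / (n + s)) ^ 2 ≤ corrSum g m x (n + s) a := by
  rcases n.eq_zero_or_pos with rfl | hn
  · simpa using corrSum_nonneg
  rw [corrSum_eq_corrCount_div, corrSum_eq_corrCount_div, Nat.cast_add]
  calc _ = (corrCount g m (g^[s] x) n a : ℝ) / (n + s) ^ 2 := by field_simp
    _ ≤ _ := by gcongr; exact corrCount_iterate_le

lemma corrUpper_le_corrUpper_apply (hφ : Function.Commute φ g) (hb : 0 ≤ b)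
    (H : ∀ u v, dist u v ≤ a → dist (φ u) (φ v) ≤ b) :
    corrUpper g m x a ≤ corrUpper g m (φ x) b :=
  limsup_le_limsup (Eventually.of_forall fun _ => corrSum_le_corrSum_apply hφ hb H)
    (isCoboundedUnder_le_of_le _ fun _ => corrSum_nonneg) isBoundedUnder_corrSum

lemma corrLower_le_corrLower_apply (hφ : Function.Commute φ g) (hb : 0 ≤ b)
    (H : ∀ u v, dist u v ≤ a → dist (φ u) (φ v) ≤ b) :
    corrLower g m x a ≤ corrLower g m (φ x) b :=
  liminf_le_liminf (Eventually.of_forall fun _ => corrSum_le_corrSum_apply hφ hb H)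
    (isBoundedUnder_of ⟨0, fun _ => corrSum_nonneg⟩) isBoundedUnder_corrSum.isCoboundedUnder_ge

lemma tendsto_natCast_div_add_sq (s : ℕ) :
    Tendsto (fun n : ℕ => ((n : ℝ) / (n + s)) ^ 2) atTop (𝓝 1) := by
  simpa using (tendsto_natCast_div_add_atTop (s : ℝ)).pow 2

lemma corrUpper_iterate_le : corrUpper g m (g^[s] x) a ≤ corrUpper g m x a := by
  unfold corrUpper
  rw [← limsup_nat_add (fun n => corrSum g m x n a) s]
  exact limsup_le_limsup_of_mul_le (u := fun n => corrSum g m (g^[s] x) n a)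
    (c := fun n : ℕ => ((n : ℝ) / (n + s)) ^ 2) (Eventually.of_forall fun _ => corrSum_nonneg)
    isBoundedUnder_corrSum (isBoundedUnder_of ⟨1, fun _ => corrSum_le_one⟩)
    (tendsto_natCast_div_add_sq s)
    (Eventually.of_forall fun _ => corrSum_iterate_mul_le)

lemma corrLower_iterate_le : corrLower g m (g^[s] x) a ≤ corrLower g m x a := by
  unfold corrLower
  rw [← liminf_nat_add (fun n => corrSum g m x n a) s]
  exact liminf_le_liminf_of_mul_le (u := fun n => corrSum g m (g^[s] x) n a)
    (c := fun n : ℕ => ((n : ℝ) / (n + s)) ^ 2) (Eventually.of_forall fun _ => corrSum_nonneg)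
    isBoundedUnder_corrSum (isBoundedUnder_of ⟨1, fun _ => corrSum_le_one⟩)
    (tendsto_natCast_div_add_sq s)
    (Eventually.of_forall fun _ => corrSum_iterate_mul_le)

end Correlation

theorem corr_iterate_sandwich_general {X : Type*} [MetricSpace X] [CompactSpace X]
    (f : X → X) (hf : Continuous f) (k h : ℕ) (hk : 0 < k)
    (ε : ℝ) (hε : 0 < ε) :
    ∃ γ δ : ℝ, 0 < γ ∧ γ < δ ∧ δ < ε ∧
      ∀ (x : X) (m : ℕ), 0 < m →
        (corrUpper (f^[k]) m x γ ≤ corrUpper (f^[k]) m (f^[h] x) δ ∧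
          corrUpper (f^[k]) m (f^[h] x) δ ≤ corrUpper (f^[k]) m x ε) ∧
        (corrLower (f^[k]) m x γ ≤ corrLower (f^[k]) m (f^[h] x) δ ∧
          corrLower (f^[k]) m (f^[h] x) δ ≤ corrLower (f^[k]) m x ε) := by
  have huc (n : ℕ) : UniformContinuous f^[n] :=
    CompactSpace.uniformContinuous_of_continuous (hf.iterate n)
  have hcomm (n : ℕ) : Function.Commute f^[n] f^[k] := Function.Commute.iterate_iterate_self f n k
  obtain ⟨δ, hδ, hδε, hψ⟩ := (huc (k * h - h)).exists_lt_forall_dist_le hε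
  obtain ⟨γ, hγ, hγδ, hφ⟩ := (huc h).exists_lt_forall_dist_le hδ
  refine ⟨γ, δ, hγ, hγδ, hδε, fun x m _ => ?_⟩
  have hshift : f^[k * h - h] (f^[h] x) = (f^[k])^[h] x := by
    rw [← Function.iterate_add_apply, Nat.sub_add_cancel (Nat.le_mul_of_pos_left h hk),
      Function.iterate_mul]
  refine ⟨⟨corrUpper_le_corrUpper_apply (hcomm h) hδ.le hφ, ?_⟩,
    ⟨corrLower_le_corrLower_apply (hcomm h) hδ.le hφ, ?_⟩⟩
  · calc _ ≤ corrUpper (f^[k]) m ((f^[k])^[h] x) ε :=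
          hshift ▸ corrUpper_le_corrUpper_apply (hcomm _) hε.le hψ
      _ ≤ _ := corrUpper_iterate_le
  · calc _ ≤ corrLower (f^[k]) m ((f^[k])^[h] x) ε :=
          hshift ▸ corrLower_le_corrLower_apply (hcomm _) hε.le hψ
      _ ≤ _ := corrLower_iterate_le

/-- For every `ε > 0` there are `0 < γ < δ < ε` such that for every `x ∈ X` and `m ∈ ℕ`:
`ĉ^{f^k}_m(x,γ) ≤ ĉ^{f^k}_m(f^h(x),δ) ≤ ĉ^{f^k}_m(x,ε)` and likewise for `č`. -/
theorem corr_iterate_sandwich {X : Type*} [MetricSpace X] [CompactSpace X]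
    (f : X → X) (hf : Continuous f) (k h : ℕ) (hk : 0 < k) (hh : 0 < h)
    (ε : ℝ) (hε : 0 < ε) :
    ∃ γ δ : ℝ, 0 < γ ∧ γ < δ ∧ δ < ε ∧
      ∀ (x : X) (m : ℕ), 0 < m →
        (corrUpper (f^[k]) m x γ ≤ corrUpper (f^[k]) m (f^[h] x) δ ∧
          corrUpper (f^[k]) m (f^[h] x) δ ≤ corrUpper (f^[k]) m x ε) ∧
        (corrLower (f^[k]) m x γ ≤ corrLower (f^[k]) m (f^[h] x) δ ∧
          corrLower (f^[k]) m (f^[h] x) δ ≤ corrLower (f^[k]) m x ε) :=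
  corr_iterate_sandwich_general f hf k h hk ε hε
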